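/- For any α, ω : Finset Q, the subgroup of (Finset Q, Δ) generated by G_α ∪ G_{α Δ ω} equals the subgroup generated by G_α ∪ G_ω; call it G. Moreover, for any e_α ∈ E_α, e_ω ∈ E_ω and e_{α Δ ω} ∈ E_{α Δ ω}, one has e_α Δ e_{α Δ ω} Δ e_ω Δ (α ∩ ω) ∈ G; i.e., in coset notation, e_α e_{α+ω} G_α G_{α+ω} = e_ω Z_{α∩ω} G_α G_ω. (Lemma A6.) -/

import Mathlib

/-!
Every generator `(α ∆ ω) ∩ β` of `G_{α∆ω}` is the sum `(α ∩ β) ∆ (ω ∩ β)` of generators of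
`G_α` and `G_ω`, so `G_{α∆ω} ⊆ ⟨G_α, G_ω⟩`; as `ω = α ∆ (α ∆ ω)`, also `G_ω ⊆ ⟨G_α, G_{α∆ω}⟩`.

For the coset statement, identify `Finset Q` with `F₂^Q`: the subgroup `G` is then a subspace,
which equals its double orthogonal for the dot product. So it suffices that
`x = e_α ∆ e_{α∆ω} ∆ e_ω ∆ (α ∩ ω)` meets every `γ ∈ Z(G)` evenly. Such a `γ` lies in
`Z(G_α)`, `Z(G_ω)` and `Z(G_{α∆ω})`, so the three congruences defining the `E`'s hold at `γ`;
combining them with `g(γ ∩ (α ∆ ω)) = g(γ ∩ α) + g(γ ∩ ω) - 2 g(γ ∩ α ∩ ω)` and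
`g ≡ card (mod 2)` (all `b q` odd) gives `|x ∩ γ| ≡ 0 (mod 2)`.
-/

open Finset
open scoped symmDiff Matrix

namespace CC

variable {Q : Type*} [Fintype Q] [DecidableEq Q]

/-- A subgroup of the abelian group `(Finset Q, ∆)`. -/
def IsSubgroup (S : Set (Finset Q)) : Prop :=
  ∅ ∈ S ∧ ∀ a ∈ S, ∀ b ∈ S, a ∆ b ∈ S

/-- The subgroup of `(Finset Q, ∆)` generated by a set. -/
def closure (T : Set (Finset Q)) : Set (Finset Q) :=
  ⋂₀ {S : Set (Finset Q) | IsSubgroup S ∧ T ⊆ S}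

/-- A CSS stabilizer code on the qubits `Q`. -/
structure CSS (Q : Type*) [Fintype Q] [DecidableEq Q] where
  SX : Set (Finset Q)
  SZ : Set (Finset Q)
  hSX : IsSubgroup SX
  hSZ : IsSubgroup SZ
  comm : ∀ a ∈ SZ, ∀ b ∈ SX, 2 ∣ (a ∩ b).card

def ZX (C : CSS Q) : Set (Finset Q) := {γ | ∀ f ∈ C.SZ, 2 ∣ (γ ∩ f).card}

def ZZ (C : CSS Q) : Set (Finset Q) := {z | ∀ c ∈ C.SX, 2 ∣ (z ∩ c).card}

/-- Duality assumption. -/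
def Dual (C : CSS Q) : Prop :=
  C.SZ = {z | ∀ γ ∈ ZX C, 2 ∣ (z ∩ γ).card} ∧
  C.SX = {c | ∀ z ∈ ZZ C, 2 ∣ (c ∩ z).card}

def LogicalX (C : CSS Q) (l : Finset Q) : Prop := l ∈ ZX C ∧ l ∉ C.SX

def LogicalZ (C : CSS Q) (l : Finset Q) : Prop := l ∈ ZZ C ∧ l ∉ C.SZ

/-- Single-logical-qubit assumption. -/
def SingleQubit (C : CSS Q) : Prop :=
  (ZX C ≠ C.SX ∧ ∀ l l', LogicalX C l → LogicalX C l' → l ∆ l' ∈ C.SX) ∧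
  (ZZ C ≠ C.SZ ∧ ∀ l l', LogicalZ C l → LogicalZ C l' → l ∆ l' ∈ C.SZ)

/-- Intersection axiom. -/
def Inter (C : CSS Q) : Prop :=
  ZZ C = {x | ∃ α ∈ ZX C, ∃ β ∈ ZX C, x = α ∩ β}

def G (C : CSS Q) (α : Finset Q) : Set (Finset Q) :=
  closure (C.SZ ∪ {x | ∃ β ∈ ZX C, x = α ∩ β})

def H (C : CSS Q) (α : Finset Q) : Set (Finset Q) :=
  closure (C.SZ ∪ {x | ∃ β ∈ C.SX, x = α ∩ β})

def Zof (K : Set (Finset Q)) : Set (Finset Q) := {γ | ∀ h ∈ K, 2 ∣ (γ ∩ h).card}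

def Tolerable (C : CSS Q) (α : Finset Q) : Prop := ∀ z ∈ G C α, ¬ LogicalZ C z

def g (b : Q → ℤ) (s : Finset Q) : ℤ := ∑ q ∈ s, b q

/-- T-invariance assumption. -/
def TInv (C : CSS Q) (b : Q → ℤ) : Prop :=
  (∀ β ∈ C.SX, (8 : ℤ) ∣ g b β) ∧
  (∀ β ∈ C.SX, ∀ γ ∈ ZX C, (8 : ℤ) ∣ (g b β - 2 * g b (γ ∩ β)))

def E (C : CSS Q) (b : Q → ℤ) (α : Finset Q) : Set (Finset Q) :=
  {z | ∀ γ ∈ Zof (G C α), g b (γ ∩ α) ≡ 2 * ((z ∩ γ).card : ℤ) [ZMOD 4]}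

/- Quantum setting -/

abbrev M (Q : Type*) [Fintype Q] [DecidableEq Q] :=
  Matrix (Q → ZMod 2) (Q → ZMod 2) ℂ

def supp (v : Q → ZMod 2) : Finset Q := Finset.univ.filter (fun q => v q = 1)

def ind (α : Finset Q) : Q → ZMod 2 := fun q => if q ∈ α then 1 else 0

def XM (α : Finset Q) : M Q :=
  Matrix.of fun u v => if u = v + ind α then (1 : ℂ) else 0

noncomputable def ZM (α : Finset Q) : M Q :=
  Matrix.diagonal fun v => (-1 : ℂ) ^ (supp v ∩ α).card

noncomputable def AM (b : Q → ℤ) (α : Finset Q) : M Q :=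
  Matrix.diagonal fun v => Complex.I ^ (g b (α ∩ supp v))

noncomputable def UM (b : Q → ℤ) : M Q :=
  Matrix.diagonal fun v => Complex.exp (Real.pi * Complex.I / 4) ^ (g b (supp v))

def Encoded (C : CSS Q) (ρ : M Q) : Prop :=
  ρ.trace = 1 ∧
  (∀ c ∈ C.SX, XM c * ρ = ρ ∧ ρ * XM c = ρ) ∧
  (∀ f ∈ C.SZ, ZM f * ρ = ρ ∧ ρ * ZM f = ρ)

instance : Std.Commutative (α := Finset Q) (· ∆ ·) := ⟨symmDiff_comm⟩
instance : Std.Associative (α := Finset Q) (· ∆ ·) := ⟨symmDiff_assoc⟩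

/-- Iterated symmetric difference over a finite index set. -/
def bigΔ {ι : Type*} (s : Finset ι) (f : ι → Finset Q) : Finset Q :=
  s.fold (· ∆ ·) ∅ f

end CC

namespace CC

section SymmDiff

variable {Q : Type*} [DecidableEq Q]

lemma isSubgroup_closure (T : Set (Finset Q)) : IsSubgroup (closure T) :=
  ⟨fun _ hS => hS.1.1, fun _ ha _ hb S hS => hS.1.2 _ (ha S hS) _ (hb S hS)⟩

lemma subset_closure (T : Set (Finset Q)) : T ⊆ closure T :=
  fun _ hx _ hS => hS.2 hx

lemma closure_subset {T S : Set (Finset Q)} (hS : IsSubgroup S) (hTS : T ⊆ S) :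
    closure T ⊆ S :=
  fun _ hx => hx S ⟨hS, hTS⟩

lemma Zof_antitone {K K' : Set (Finset Q)} (h : K ⊆ K') : Zof K' ⊆ Zof K :=
  fun _ hγ x hx => hγ x (h hx)

lemma ind_empty : ind (∅ : Finset Q) = 0 := by
  funext q; simp [ind]

lemma ind_symmDiff (s t : Finset Q) : ind (s ∆ t) = ind s + ind t := by
  funext q
  by_cases hs : q ∈ s <;> by_cases ht : q ∈ t <;> simp [ind, mem_symmDiff, hs, ht]
  decide

end SymmDiff

section DotProduct

variable {Q : Type*} [Fintype Q]

lemma dotProductBilin_isRefl (R : Type*) [CommRing R] :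
    (dotProductBilin R R : LinearMap.BilinForm R (Q → R)).IsRefl :=
  fun u v h => by simpa [dotProduct_comm] using h

lemma dotProductBilin_nondegenerate [DecidableEq Q] (R : Type*) [CommRing R] :
    (dotProductBilin R R : LinearMap.BilinForm R (Q → R)).Nondegenerate := by
  refine ((dotProductBilin_isRefl R).nondegenerate_iff_separatingLeft).2
    fun v hv => funext fun q => ?_
  simpa [dotProduct_single_one] using hv (Pi.single q 1)

end DotProduct

section Duality

variable {Q : Type*} [Fintype Q] [DecidableEq Q]

lemma supp_ind (s : Finset Q) : supp (ind s) = s := by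
  ext q; by_cases hq : q ∈ s <;> simp [ind, supp, hq]

lemma ind_supp (v : Q → ZMod 2) : ind (supp v) = v := by
  funext q
  obtain h | h : v q = 0 ∨ v q = 1 := by generalize v q = c; decide +revert
  all_goals simp [ind, supp, h]

lemma ind_dotProduct_ind (s t : Finset Q) : ind s ⬝ᵥ ind t = (#(s ∩ t) : ZMod 2) := by
  simp only [dotProduct, ind, mul_ite, mul_one, mul_zero, ← ite_and, ← mem_inter]
  rw [sum_ite_mem, univ_inter, sum_const, nsmul_eq_mul, mul_one, inter_comm]

lemma mem_closure_iff_ind_mem_span (T : Set (Finset Q)) (z : Finset Q) :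
    z ∈ closure T ↔ ind z ∈ Submodule.span (ZMod 2) (ind '' T) := by
  refine ⟨fun hz => hz {x | ind x ∈ Submodule.span (ZMod 2) (ind '' T)} ⟨⟨?_, ?_⟩, ?_⟩, ?_⟩
  · simp [ind_empty]
  · intro s hs t ht
    simpa [ind_symmDiff] using add_mem hs ht
  · exact fun t ht => Submodule.subset_span ⟨t, ht, rfl⟩
  · intro hz
    suffices hspan : ∀ v ∈ Submodule.span (ZMod 2) (ind '' T), v ∈ ind '' closure T by
      obtain ⟨y, hy, hyz⟩ := hspan _ hz
      rwa [← supp_ind z, ← hyz, supp_ind]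
    intro v hv
    induction hv using Submodule.span_induction with
    | mem v hv => exact Set.image_mono (subset_closure T) hv
    | zero => exact ⟨∅, (isSubgroup_closure T).1, ind_empty⟩
    | add u v _ _ hu hv =>
      obtain ⟨s, hs, rfl⟩ := hu
      obtain ⟨t, ht, rfl⟩ := hv
      exact ⟨s ∆ t, (isSubgroup_closure T).2 s hs t ht, ind_symmDiff s t⟩
    | smul c v _ hv =>
      obtain rfl | rfl : c = 0 ∨ c = 1 := by decide +revert
      · simpa using ⟨∅, (isSubgroup_closure T).1, ind_empty⟩
      · simpa using hv

lemma mem_closure_of_forall_two_dvd_card_inter {T : Set (Finset Q)} {z : Finset Q}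
    (h : ∀ γ ∈ Zof (closure T), 2 ∣ #(z ∩ γ)) : z ∈ closure T := by
  rw [mem_closure_iff_ind_mem_span, ← LinearMap.BilinForm.orthogonal_orthogonal
    (dotProductBilin_nondegenerate (ZMod 2)) (dotProductBilin_isRefl (ZMod 2))
    (Submodule.span (ZMod 2) (ind '' T))]
  intro v hv
  have hγ : supp v ∈ Zof (closure T) := fun x hx => by
    have := hv (ind x) ((mem_closure_iff_ind_mem_span T x).1 hx)
    rwa [← ind_supp v, dotProductBilin_apply_apply, ind_dotProduct_ind,
      ZMod.natCast_eq_zero_iff, inter_comm] at this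
  change v ⬝ᵥ ind z = 0
  rw [← ind_supp v, ind_dotProduct_ind, ZMod.natCast_eq_zero_iff, inter_comm]
  exact h _ hγ

end Duality

section Weights

variable {Q : Type*}

lemma g_symmDiff [DecidableEq Q] (b : Q → ℤ) (s t : Finset Q) :
    g b (s ∆ t) = g b s + g b t - 2 * g b (s ∩ t) := by
  have hunion : g b (s ∪ t) = g b (s ∆ t) + g b (s ∩ t) := by
    rw [← sup_eq_union, ← symmDiff_sup_inf]
    exact sum_union (disjoint_symmDiff_inf s t)
  have := sum_union_inter (s₁ := s) (s₂ := t) (f := b)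
  simp only [g] at *
  linarith

lemma card_symmDiff_modEq [DecidableEq Q] (s t : Finset Q) :
    (#(s ∆ t) : ℤ) ≡ #s + #t [ZMOD 2] := by
  have := g_symmDiff (fun _ => 1) s t
  simp only [g, sum_const, nsmul_eq_mul, mul_one] at this
  rw [this, Int.modEq_iff_dvd]
  exact ⟨#(s ∩ t), by ring⟩

lemma g_modEq_card {b : Q → ℤ} (hb : ∀ q, Odd (b q)) (s : Finset Q) :
    g b s ≡ #s [ZMOD 2] := by
  rw [card_eq_sum_ones, Nat.cast_sum, g, Nat.cast_one]
  exact Int.ModEq.sum fun q _ => Int.odd_iff.1 (hb q)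

end Weights

section Cosets

variable {Q : Type*} [Fintype Q] [DecidableEq Q] (C : CSS Q)

lemma G_symmDiff_subset (u v : Finset Q) : G C (u ∆ v) ⊆ closure (G C u ∪ G C v) := by
  have hu : G C u ⊆ closure (G C u ∪ G C v) := Set.subset_union_left.trans (subset_closure _)
  have hv : G C v ⊆ closure (G C u ∪ G C v) := Set.subset_union_right.trans (subset_closure _)
  refine closure_subset (isSubgroup_closure _) ?_
  rintro x (hx | ⟨β, hβ, rfl⟩)
  · exact hu (subset_closure _ (Or.inl hx))
  · rw [← inf_eq_inter, inf_symmDiff_distrib_right]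
    exact (isSubgroup_closure _).2 _ (hu (subset_closure _ (Or.inr ⟨β, hβ, rfl⟩)))
      _ (hv (subset_closure _ (Or.inr ⟨β, hβ, rfl⟩)))

lemma closure_G_union_G_symmDiff (α ω : Finset Q) :
    closure (G C α ∪ G C (α ∆ ω)) = closure (G C α ∪ G C ω) := by
  have key (u v : Finset Q) : closure (G C u ∪ G C (u ∆ v)) ⊆ closure (G C u ∪ G C v) :=
    closure_subset (isSubgroup_closure _)
      (Set.union_subset (Set.subset_union_left.trans (subset_closure _)) (G_symmDiff_subset C u v))
  refine (key α ω).antisymm ?_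
  simpa only [symmDiff_symmDiff_cancel_left] using key α (α ∆ ω)

variable {C}

lemma two_dvd_card_inter_of_mem_E {b : Q → ℤ} (hb : ∀ q, Odd (b q))
    {α ω eα eω eαω γ : Finset Q}
    (hα : eα ∈ E C b α) (hω : eω ∈ E C b ω) (hαω : eαω ∈ E C b (α ∆ ω))
    (hγα : γ ∈ Zof (G C α)) (hγω : γ ∈ Zof (G C ω)) (hγαω : γ ∈ Zof (G C (α ∆ ω))) :
    2 ∣ #((eα ∆ eαω ∆ eω ∆ (α ∩ ω)) ∩ γ) := by
  have hsplit : g b (γ ∩ (α ∆ ω)) = g b (γ ∩ α) + g b (γ ∩ ω) - 2 * g b (γ ∩ (α ∩ ω)) := by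
    have hdistrib : γ ∩ (α ∆ ω) = (γ ∩ α) ∆ (γ ∩ ω) := inf_symmDiff_distrib_left _ _ _
    rw [hdistrib, g_symmDiff, ← inter_inter_distrib_left]
  have hpar := g_modEq_card hb (γ ∩ (α ∩ ω))
  have hEα := hα γ hγα
  have hEω := hω γ hγω
  have hEαω := hαω γ hγαω
  rw [hsplit] at hEαω
  have hcard : (#((eα ∆ eαω ∆ eω ∆ (α ∩ ω)) ∩ γ) : ℤ) ≡
      #(eα ∩ γ) + #(eαω ∩ γ) + #(eω ∩ γ) + #(γ ∩ (α ∩ ω)) [ZMOD 2] := by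
    simp only [← inf_eq_inter, inf_symmDiff_distrib_right]
    calc _ ≡ _ + _ [ZMOD 2] := card_symmDiff_modEq _ _
      _ ≡ _ + _ + _ [ZMOD 2] := (card_symmDiff_modEq _ _).add_right _
      _ ≡ _ [ZMOD 2] := ((card_symmDiff_modEq _ _).add_right _).add_right _
      _ = _ := by rw [inf_comm (α ⊓ ω)]
  suffices (2 : ℤ) ∣ #((eα ∆ eαω ∆ eω ∆ (α ∩ ω)) ∩ γ) by exact_mod_cast this
  simp only [Int.ModEq] at hpar hEα hEω hEαω hcard
  omega

end Cosets

variable {Q : Type*} [Fintype Q] [DecidableEq Q]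

theorem coset_identity_general
    (C : CSS Q) (b : Q → ℤ) (hb : ∀ q, Odd (b q))
    (α ω : Finset Q) (eα eω eαω : Finset Q)
    (h1 : eα ∈ E C b α) (h2 : eω ∈ E C b ω) (h3 : eαω ∈ E C b (α ∆ ω)) :
    closure (G C α ∪ G C (α ∆ ω)) = closure (G C α ∪ G C ω) ∧
    eα ∆ eαω ∆ eω ∆ (α ∩ ω) ∈ closure (G C α ∪ G C (α ∆ ω)) := by
  have heq := closure_G_union_G_symmDiff C α ω
  refine ⟨heq, mem_closure_of_forall_two_dvd_card_inter fun γ hγ => ?_⟩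
  have hZ {K : Set (Finset Q)} (hK : K ⊆ closure (G C α ∪ G C (α ∆ ω))) : γ ∈ Zof K :=
    Zof_antitone hK hγ
  refine two_dvd_card_inter_of_mem_E hb h1 h2 h3
    (hZ (Set.subset_union_left.trans (subset_closure _))) (hZ ?_)
    (hZ (Set.subset_union_right.trans (subset_closure _)))
  rw [heq]
  exact Set.subset_union_right.trans (subset_closure _)

/-- Lemma A6: in coset notation, `e_α e_{α+ω} G_α G_{α+ω} = e_ω Z_{α∩ω} G_α G_ω`. -/
theorem coset_identity
    (C : CSS Q) (b : Q → ℤ) (hb : ∀ q, Odd (b q))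
    (hdual : Dual C) (hinter : Inter C) (htinv : TInv C b)
    (α ω : Finset Q) (eα eω eαω : Finset Q)
    (h1 : eα ∈ E C b α) (h2 : eω ∈ E C b ω) (h3 : eαω ∈ E C b (α ∆ ω)) :
    closure (G C α ∪ G C (α ∆ ω)) = closure (G C α ∪ G C ω) ∧
    eα ∆ eαω ∆ eω ∆ (α ∩ ω) ∈ closure (G C α ∪ G C (α ∆ ω)) :=
  coset_identity_general C b hb α ω eα eω eαω h1 h2 h3

end CC
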